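/- Let l : {1,2,3,…} → ℝ be a function satisfying (1) l(a·b) = l(a) + l(b) for all positive integers a, b, and (2) l(n+1) − l(n) → 0 as n → ∞. Then there exists a real constant c such that l(n) = c·ln n for all positive integers n. -/

import Mathlib

/-!
Subtracting `c · log` with `c = l 2 / log 2` reduces to the case `l 2 = 0`, where `l (2m) = l m`.
Then `l n` differs from `l ⌊n/2⌋` by at most one increment `l (2m+1) - l (2m)`, so halving down
to a fixed finite range gives `|l n| ≤ B_ε + ε log₂ n` for every `ε > 0`. Applied to `n = m^k`
this reads `k |l m| ≤ B_ε + k ε log₂ m`; letting `k → ∞` and then `ε → 0` gives `l m = 0`.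
-/

open Filter Topology

lemma le_of_forall_nat_mul_le_add {a b B : ℝ} (h : ∀ k : ℕ, k * a ≤ B + k * b) : a ≤ b := by
  by_contra! hba
  obtain ⟨k, hk⟩ := exists_nat_gt (B / (a - b))
  rw [div_lt_iff₀ (sub_pos.2 hba)] at hk
  nlinarith [h k]

lemma eq_zero_of_forall_abs_le_mul {a L : ℝ} (h : ∀ ε > 0, |a| ≤ ε * L) : a = 0 := by
  have hlim : Tendsto (fun ε : ℝ => ε * L) (𝓝[>] 0) (𝓝 0) := by
    simpa using ((continuous_mul_const L).tendsto 0).mono_left nhdsWithin_le_nhds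
  exact abs_nonpos_iff.1 (ge_of_tendsto hlim (eventually_nhdsWithin_of_forall h))

section HalvingEstimate

variable {f : ℕ → ℝ}

lemma map_pow_of_map_mul (h_add : ∀ a b : ℕ, 0 < a → 0 < b → f (a * b) = f a + f b)
    {m : ℕ} (hm : 0 < m) (k : ℕ) : f (m ^ k) = k * f m := by
  induction k with
  | zero => simpa using h_add 1 1 one_pos one_pos
  | succ k ih =>
    rw [pow_succ, h_add _ _ (pow_pos hm k) hm, ih]
    push_cast
    ring

lemma exists_abs_le_add_mul_natLog_two (h_double : ∀ m, f (2 * m) = f m)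
    (h_lim : Tendsto (fun n => f (n + 1) - f n) atTop (𝓝 0)) {ε : ℝ} (hε : 0 < ε) :
    ∃ B, ∀ n, |f n| ≤ B + ε * Nat.log 2 n := by
  obtain ⟨N, hN⟩ := Metric.tendsto_atTop.1 h_lim ε hε
  have h_half : ∀ n, 2 * N ≤ n → |f n - f (n / 2)| ≤ ε := by
    intro n hn
    rw [← h_double (n / 2)]
    rcases Nat.even_or_odd' n with ⟨m, rfl | rfl⟩
    · simp [hε.le]
    · rw [show (2 * m + 1) / 2 = m by omega, ← Real.dist_0_eq_abs]
      exact (hN (2 * m) (by omega)).le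
  refine ⟨∑ i ∈ Finset.range (2 * N + 2), |f i|, fun n => ?_⟩
  induction n using Nat.strong_induction_on with
  | _ n ih =>
    by_cases hn : n < 2 * N + 2
    · have h_small : |f n| ≤ ∑ i ∈ Finset.range (2 * N + 2), |f i| :=
        Finset.single_le_sum (f := fun i => |f i|) (fun i _ => abs_nonneg _)
          (Finset.mem_range.2 hn)
      have : 0 ≤ ε * Nat.log 2 n := by positivity
      linarith
    · have h_log : (Nat.log 2 n : ℝ) = Nat.log 2 (n / 2) + 1 := by
        rw [Nat.log_div_base, Nat.cast_sub (Nat.log_pos one_lt_two (by omega))]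
        ring
      calc |f n| ≤ |f (n / 2)| + |f n - f (n / 2)| := by
            linarith [abs_sub_abs_le_abs_sub (f n) (f (n / 2))]
        _ ≤ _ + ε * Nat.log 2 (n / 2) + ε := add_le_add (ih _ (by omega)) (h_half n (by omega))
        _ = _ := by rw [h_log]; ring

theorem eq_zero_of_map_two_eq_zero (h_add : ∀ a b : ℕ, 0 < a → 0 < b → f (a * b) = f a + f b)
    (h_two : f 2 = 0) (h_lim : Tendsto (fun n => f (n + 1) - f n) atTop (𝓝 0))
    {m : ℕ} (hm : 0 < m) : f m = 0 := by
  have h_double : ∀ n, f (2 * n) = f n := fun n => by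
    rcases n.eq_zero_or_pos with rfl | hn
    · rfl
    · rw [h_add 2 n two_pos hn, h_two, zero_add]
  refine eq_zero_of_forall_abs_le_mul (L := Real.logb 2 m) fun ε hε => ?_
  obtain ⟨B, hB⟩ := exists_abs_le_add_mul_natLog_two h_double h_lim hε
  refine le_of_forall_nat_mul_le_add (B := B) fun k => ?_
  calc k * |f m| = |f (m ^ k)| := by rw [map_pow_of_map_mul h_add hm, abs_mul, Nat.abs_cast]
    _ ≤ B + ε * Nat.log 2 (m ^ k) := hB _
    _ ≤ B + ε * Real.logb 2 (m ^ k) := by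
      gcongr
      exact_mod_cast Real.natLog_le_logb (m ^ k) 2
    _ = B + k * (ε * Real.logb 2 m) := by rw [Real.logb_pow]; ring

end HalvingEstimate

/-- If `l : {1,2,…} → ℝ` is completely additive (`l (a·b) = l a + l b` for all
positive integers `a`, `b`) and `l (n+1) - l n → 0` as `n → ∞`, then
`l n = c · ln n` for some real constant `c`. -/
theorem completely_additive_of_small_increments
    (l : ℕ → ℝ)
    (h_add : ∀ a b : ℕ, 0 < a → 0 < b → l (a * b) = l a + l b)
    (h_lim : Tendsto (fun n : ℕ => l (n + 1) - l n) atTop (nhds 0)) :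
    ∃ c : ℝ, ∀ n : ℕ, 0 < n → l n = c * Real.log n := by
  set c := l 2 / Real.log 2
  refine ⟨c, fun n hn => sub_eq_zero.1 <|
    eq_zero_of_map_two_eq_zero (f := fun n => l n - c * Real.log n) ?_ ?_ ?_ hn⟩
  · intro a b ha hb
    push_cast
    rw [h_add a b ha hb, Real.log_mul (by positivity) (by positivity)]
    ring
  · have : Real.log 2 ≠ 0 := (Real.log_pos one_lt_two).ne'
    simp [c, this]
  · simpa using (h_lim.sub (Real.tendsto_log_nat_add_one_sub_log.const_mul c)).congr
      fun n => by ring
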